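/- arXiv:1210.0445 — 2 statements merged into one kernel-verified Lean document; each statement's English description precedes it below -/
import Mathlib

section
/- Let b ∈ ℝ, let α > 0 be real, and let f : ℝ → ℝ. Then for every m ∈ ℕ and t = b−α−m, the Riemann delta right fractional sum equals the binomial one: (1/Γ(α)) Σ_{j=0}^{m} [Γ(α+m−j)/Γ(m−j+1)]·f(b−j) = Σ_{k=0}^{m} (−1)^k binom(−α,k)·f(b−m+k) (note b−m+k = t+α+k). -/
/-- Generalized binomial coefficient binom(α,k) = α(α−1)⋯(α−k+1)/k!. -/
noncomputable def rbinom (α : ℝ) (k : ℕ) : ℝ :=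
  (∏ i ∈ Finset.range k, (α - i)) / (Nat.factorial k)

lemma gamma_add_nat (α : ℝ) (hα : 0 < α) (k : ℕ) :
    Real.Gamma (α + k) = (∏ i ∈ Finset.range k, (α + i)) * Real.Gamma α := by
  induction k with
  | zero => simp
  | succ n ih =>
    have h : α + ((n + 1 : ℕ) : ℝ) = (α + n) + 1 := by push_cast; ring
    have hne : α + (n : ℝ) ≠ 0 := by positivity
    rw [h, Real.Gamma_add_one hne, ih, Finset.prod_range_succ]
    ring

lemma term_eq (α : ℝ) (hα : 0 < α) (k : ℕ) :
    (1 / Real.Gamma α) * (Real.Gamma (α + k) / Real.Gamma ((k : ℝ) + 1))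
      = (-1 : ℝ) ^ k * rbinom (-α) k := by
  have hΓ : Real.Gamma α ≠ 0 := (Real.Gamma_pos_of_pos hα).ne'
  have hfac : (Nat.factorial k : ℝ) ≠ 0 := by positivity
  rw [gamma_add_nat α hα, Real.Gamma_nat_eq_factorial, rbinom]
  have hneg : (∏ i ∈ Finset.range k, (-α - (i : ℝ)))
      = (-1 : ℝ) ^ k * ∏ i ∈ Finset.range k, (α + i) := by
    simp_rw [show ∀ i : ℕ, -α - (i : ℝ) = (-1) * (α + i) from fun i => by ring,
      Finset.prod_mul_distrib, Finset.prod_const, Finset.card_range]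
  rw [hneg]
  have hsq : ((-1 : ℝ) ^ k) * ((-1 : ℝ) ^ k) = 1 := by
    rw [← mul_pow]; norm_num
  have h2 : (-1 : ℝ) ^ (k * 2) = 1 := by rw [pow_mul']; norm_num
  field_simp
  rw [← pow_mul, h2]

/-- The Riemann delta right fractional sum coincides with the binomial one
at t = b−α−m. -/
theorem delta_right_sum_eq_binomial (b α : ℝ) (hα : 0 < α) (f : ℝ → ℝ) :
    ∀ m : ℕ,
      (1 / Real.Gamma α) *
        ∑ j ∈ Finset.range (m + 1),
          Real.Gamma (α + m - j) / Real.Gamma ((m : ℝ) - j + 1) * f (b - j)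
      = ∑ k ∈ Finset.range (m + 1),
        (-1 : ℝ) ^ k * rbinom (-α) k * f (b - m + k) := by
  intro m
  rw [Finset.mul_sum,
    ← Finset.sum_range_reflect (fun k => (-1 : ℝ) ^ k * rbinom (-α) k * f (b - m + k)) (m + 1)]
  apply Finset.sum_congr rfl
  intro j hj
  have hj' : j ≤ m := Nat.lt_succ_iff.mp (Finset.mem_range.mp hj)
  simp only [Nat.add_sub_cancel]
  have hc : ((m - j : ℕ) : ℝ) = (m : ℝ) - j := by
    rw [Nat.cast_sub hj']
  have e1 : α + (m : ℝ) - j = α + ((m - j : ℕ) : ℝ) := by rw [hc]; ring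
  have e2 : (m : ℝ) - j + 1 = ((m - j : ℕ) : ℝ) + 1 := by rw [hc]
  have e3 : b - (m : ℝ) + ((m - j : ℕ) : ℝ) = b - j := by rw [hc]; ring
  rw [e1, e2, e3]
  have := term_eq α hα (m - j)
  linear_combination f (b - j) * this
end

section
/- Let a ∈ ℝ, let α > 0 be real with n−1 < α < n for a natural number n, and let f : ℝ → ℝ. Define H(τ) = (1/Γ(n−α)) Σ_{j=1}^{τ−a} [Γ(τ−a−j+n−α)/Γ(τ−a−j+1)]·f(a+j), the nabla left fractional sum ∇_a^{−(n−α)} f(τ) for τ ∈ a+ℕ (sums over empty ranges being zero). Then for every integer m ≥ 1 and t = a+m, the Riemann nabla left fractional difference equals the binomial one: Σ_{i=0}^{n} (−1)^i C(n,i) H(t−i) = Σ_{k=0}^{m−1} (−1)^k binom(α,k)·f(a+m−k). -/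
/-- Auxiliary coefficient: `gaux β s = binom(s+β−1, s)` for `s ≥ 0`, and `0` for `s < 0`. -/
noncomputable def gaux (β : ℝ) (s : ℤ) : ℝ :=
  if s < 0 then 0 else (∏ l ∈ Finset.range s.toNat, (β + l)) / (Nat.factorial s.toNat)

lemma rbinom_zero (γ : ℝ) : rbinom γ 0 = 1 := by simp [rbinom]

lemma rbinom_pascal (γ : ℝ) (k : ℕ) :
    rbinom (γ + 1) (k + 1) = rbinom γ (k + 1) + rbinom γ k := by
  unfold rbinom
  have h1 : ∏ i ∈ Finset.range (k + 1), (γ + 1 - (i : ℝ)) =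
      (γ + 1) * ∏ i ∈ Finset.range k, (γ - i) := by
    have e : ∏ i ∈ Finset.range k, (γ + 1 - ((i + 1 : ℕ) : ℝ)) =
        ∏ i ∈ Finset.range k, (γ - i) :=
      Finset.prod_congr rfl fun i _ => by push_cast; ring
    rw [Finset.prod_range_succ' (fun i => γ + 1 - (i : ℝ)) k, e]
    push_cast
    ring
  have h2 : ∏ i ∈ Finset.range (k + 1), (γ - (i : ℝ)) =
      (∏ i ∈ Finset.range k, (γ - i)) * (γ - k) := Finset.prod_range_succ _ _
  have hf : (Nat.factorial (k + 1) : ℝ) = (k + 1) * Nat.factorial k := by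
    rw [Nat.factorial_succ]; push_cast; ring
  have hk : (Nat.factorial k : ℝ) ≠ 0 := by positivity
  have hk1 : ((k : ℝ) + 1) ≠ 0 := by positivity
  rw [h1, h2, hf]
  field_simp
  ring

lemma gamma_shift (β : ℝ) (hβ : 0 < β) (q : ℕ) :
    Real.Gamma ((q : ℝ) + β) = Real.Gamma β * ∏ l ∈ Finset.range q, (β + l) := by
  induction q with
  | zero => simp
  | succ q ih =>
    have h : ((q + 1 : ℕ) : ℝ) + β = ((q : ℝ) + β) + 1 := by push_cast; ring
    rw [h, Real.Gamma_add_one (by positivity), ih, Finset.prod_range_succ]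
    ring

lemma keyA (β : ℝ) (n : ℕ) : ∀ s : ℤ,
    ∑ i ∈ Finset.range (n + 1), (-1 : ℝ) ^ i * (n.choose i : ℝ) * gaux β (s - i)
    = if s < 0 then 0 else (-1 : ℝ) ^ s.toNat * rbinom ((n : ℝ) - β) s.toNat := by
  induction n with
  | zero =>
    intro s
    rw [Finset.sum_range_one]
    simp only [Nat.choose_self, Nat.cast_one, pow_zero, one_mul, Nat.cast_zero, sub_zero,
      Nat.cast_ofNat, CharP.cast_eq_zero]
    by_cases hs : s < 0
    · simp [gaux, hs]
    · rw [if_neg hs]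
      rw [gaux, if_neg hs]
      set t := s.toNat with ht
      have hprod : ∏ i ∈ Finset.range t, ((0 : ℝ) - β - i) =
          (-1 : ℝ) ^ t * ∏ l ∈ Finset.range t, (β + l) := by
        have e : ∀ i ∈ Finset.range t, ((0 : ℝ) - β - i) = (-1) * (β + i) := fun i _ => by ring
        rw [Finset.prod_congr rfl e, Finset.prod_mul_distrib, Finset.prod_const,
          Finset.card_range]
      have h2 : (-1 : ℝ) ^ t * (-1 : ℝ) ^ t = 1 := by
        rw [← pow_add]
        exact Even.neg_one_pow ⟨t, rfl⟩
      rw [rbinom, hprod,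
        show (-1 : ℝ) ^ t * (((-1 : ℝ) ^ t * ∏ l ∈ Finset.range t, (β + l)) /
            (Nat.factorial t : ℝ)) =
          ((-1 : ℝ) ^ t * (-1 : ℝ) ^ t) * ((∏ l ∈ Finset.range t, (β + l)) /
            (Nat.factorial t : ℝ)) from by ring, h2, one_mul]
  | succ n ih =>
    intro s
    have step : ∑ i ∈ Finset.range (n + 2), (-1 : ℝ) ^ i * ((n + 1).choose i : ℝ) * gaux β (s - i)
        = (∑ i ∈ Finset.range (n + 1), (-1 : ℝ) ^ i * (n.choose i : ℝ) * gaux β (s - i))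
          - ∑ i ∈ Finset.range (n + 1), (-1 : ℝ) ^ i * (n.choose i : ℝ) * gaux β ((s - 1) - i) := by
      rw [Finset.sum_range_succ' (fun i => (-1 : ℝ) ^ i * ((n + 1).choose i : ℝ) * gaux β (s - i))]
      simp only [Nat.choose_succ_succ, Nat.cast_add, Nat.choose_zero_right, Nat.cast_one,
        pow_zero, one_mul, Nat.cast_zero]
      have split : ∑ i ∈ Finset.range (n + 1),
          (-1 : ℝ) ^ (i + 1) * ((n.choose i : ℝ) + (n.choose (i + 1) : ℝ)) * gaux β (s - (↑i + 1))
          = (∑ i ∈ Finset.range (n + 1), (-1 : ℝ) ^ (i + 1) * (n.choose i : ℝ) * gaux β (s - (↑i + 1)))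
            + ∑ i ∈ Finset.range (n + 1), (-1 : ℝ) ^ (i + 1) * (n.choose (i + 1) : ℝ) * gaux β (s - (↑i + 1)) := by
        rw [← Finset.sum_add_distrib]
        refine Finset.sum_congr rfl fun i _ => ?_
        ring
      rw [split]
      have e1 : ∑ i ∈ Finset.range (n + 1), (-1 : ℝ) ^ (i + 1) * (n.choose i : ℝ) * gaux β (s - (↑i + 1))
          = - ∑ i ∈ Finset.range (n + 1), (-1 : ℝ) ^ i * (n.choose i : ℝ) * gaux β ((s - 1) - i) := by
        rw [← Finset.sum_neg_distrib]
        refine Finset.sum_congr rfl fun i _ => ?_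
        rw [show (s - 1) - (i : ℤ) = s - (↑i + 1) by ring]
        ring
      have e2 : ∑ i ∈ Finset.range (n + 1), (-1 : ℝ) ^ (i + 1) * (n.choose (i + 1) : ℝ) * gaux β (s - (↑i + 1))
          = (∑ i ∈ Finset.range (n + 1), (-1 : ℝ) ^ i * (n.choose i : ℝ) * gaux β (s - i)) - gaux β s := by
        have full : ∑ i ∈ Finset.range (n + 2), (-1 : ℝ) ^ i * (n.choose i : ℝ) * gaux β (s - i)
            = (∑ i ∈ Finset.range (n + 1), (-1 : ℝ) ^ (i + 1) * (n.choose (i + 1) : ℝ) * gaux β (s - (↑i + 1)))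
              + gaux β s := by
          rw [Finset.sum_range_succ' (fun i => (-1 : ℝ) ^ i * (n.choose i : ℝ) * gaux β (s - i))]
          push_cast
          norm_num
        have trunc : ∑ i ∈ Finset.range (n + 2), (-1 : ℝ) ^ i * (n.choose i : ℝ) * gaux β (s - i)
            = ∑ i ∈ Finset.range (n + 1), (-1 : ℝ) ^ i * (n.choose i : ℝ) * gaux β (s - i) := by
          rw [Finset.sum_range_succ]
          simp [Nat.choose_succ_self]
        rw [trunc] at full
        linarith [full]
      rw [e1, e2]
      simp only [Nat.cast_zero, sub_zero, CharP.cast_eq_zero]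
      ring
    rw [step, ih s, ih (s - 1)]
    by_cases hs : s < 0
    · rw [if_pos hs, if_pos hs, if_pos (by omega : s - 1 < 0)]
      ring
    · simp only [if_neg hs]
      by_cases hs0 : s = 0
      · subst hs0
        norm_num [rbinom_zero]
      · have hs1 : 1 ≤ s := by omega
        simp only [if_neg hs, if_neg (show ¬ (s - 1 < 0) by omega)]
        obtain ⟨k, hk⟩ : ∃ k : ℕ, s.toNat = k + 1 := ⟨(s - 1).toNat, by omega⟩
        have hk' : (s - 1).toNat = k := by omega
        rw [hk, hk']
        have hcast : ((n + 1 : ℕ) : ℝ) - β = ((n : ℝ) - β) + 1 := by push_cast; ring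
        rw [hcast, rbinom_pascal]
        ring

/-- The Riemann nabla left fractional difference coincides with the
binomial one at t = a+m, m ≥ 1, where H = ∇_a^{−(n−α)} f (with sums over
negative/empty ranges equal to zero). -/
theorem nabla_left_riemann_eq_binomial (a α : ℝ) (n : ℕ)
    (hα : 0 < α) (hn1 : (n : ℝ) - 1 < α) (hn2 : α < n) (f H : ℝ → ℝ)
    (hH : ∀ p : ℤ, H (a + p) =
      (1 / Real.Gamma ((n : ℝ) - α)) *
        ∑ j ∈ Finset.Icc 1 p.toNat,
          Real.Gamma ((a + (p : ℝ)) - a - j + ((n : ℝ) - α)) /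
            Real.Gamma ((a + (p : ℝ)) - a - j + 1) * f (a + j)) :
    ∀ m : ℕ, 1 ≤ m →
      ∑ i ∈ Finset.range (n + 1),
        (-1 : ℝ) ^ i * (n.choose i : ℝ) * H ((a + m) - i)
      = ∑ k ∈ Finset.range m,
        (-1 : ℝ) ^ k * rbinom α k * f (a + m - k) := by
  intro m hm
  set β : ℝ := (n : ℝ) - α with hβ
  have hβ0 : 0 < β := by simp [hβ]; linarith
  have hΓβ : Real.Gamma β ≠ 0 := ne_of_gt (Real.Gamma_pos_of_pos hβ0)
  -- Step 1: closed form for H on the grid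
  have hHs : ∀ p : ℤ, p ≤ (m : ℤ) →
      H (a + p) = ∑ j ∈ Finset.Icc 1 m, gaux β (p - j) * f (a + j) := by
    intro p hp
    rw [hH p]
    have hterm : ∀ j ∈ Finset.Icc 1 p.toNat,
        Real.Gamma ((a + (p : ℝ)) - a - j + ((n : ℝ) - α)) /
            Real.Gamma ((a + (p : ℝ)) - a - j + 1) * f (a + j)
        = Real.Gamma β * (gaux β (p - j) * f (a + j)) := by
      intro j hj
      simp only [Finset.mem_Icc] at hj
      have hpj : 0 ≤ p - j := by omega
      set q : ℕ := (p - j).toNat with hq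
      have hqc : ((q : ℤ)) = p - j := by omega
      have hqr : (q : ℝ) = (p : ℝ) - j := by exact_mod_cast congrArg (Int.cast : ℤ → ℝ) hqc
      have e1 : (a + (p : ℝ)) - a - j + ((n : ℝ) - α) = (q : ℝ) + β := by
        rw [hqr, hβ]; ring
      have e2 : (a + (p : ℝ)) - a - j + 1 = (q : ℝ) + 1 := by rw [hqr]; ring
      rw [e1, e2, gamma_shift β hβ0 q, Real.Gamma_nat_eq_factorial]
      rw [gaux, if_neg (by omega : ¬ (p - (j : ℤ) < 0)), ← hq]
      field_simp
    rw [Finset.sum_congr rfl hterm, ← Finset.mul_sum, ← mul_assoc,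
      one_div_mul_cancel hΓβ, one_mul]
    refine Finset.sum_subset (Finset.Icc_subset_Icc_right (by omega)) ?_
    intro j hj hj'
    simp only [Finset.mem_Icc] at hj hj'
    have : p - (j : ℤ) < 0 := by omega
    rw [gaux, if_pos this, zero_mul]
  -- Step 2: rewrite the left-hand side and swap sums
  calc
    ∑ i ∈ Finset.range (n + 1), (-1 : ℝ) ^ i * (n.choose i : ℝ) * H ((a + m) - i)
      = ∑ i ∈ Finset.range (n + 1), (-1 : ℝ) ^ i * (n.choose i : ℝ) *
          ∑ j ∈ Finset.Icc 1 m, gaux β (((m : ℤ) - i) - j) * f (a + j) := by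
        refine Finset.sum_congr rfl fun i _ => ?_
        have h : (a + (m : ℝ)) - (i : ℝ) = a + (((m : ℤ) - i : ℤ) : ℝ) := by push_cast; ring
        rw [h, hHs ((m : ℤ) - i) (by omega)]
    _ = ∑ j ∈ Finset.Icc 1 m,
          (∑ i ∈ Finset.range (n + 1), (-1 : ℝ) ^ i * (n.choose i : ℝ) *
            gaux β (((m : ℤ) - j) - i)) * f (a + j) := by
        simp_rw [Finset.mul_sum]
        rw [Finset.sum_comm]
        refine Finset.sum_congr rfl fun j _ => ?_
        rw [Finset.sum_mul]
        refine Finset.sum_congr rfl fun i _ => ?_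
        rw [show ((m : ℤ) - j) - i = ((m : ℤ) - i) - j by ring]
        ring
    _ = ∑ j ∈ Finset.Icc 1 m,
          (-1 : ℝ) ^ (m - j) * rbinom α (m - j) * f (a + j) := by
        refine Finset.sum_congr rfl fun j hj => ?_
        simp only [Finset.mem_Icc] at hj
        rw [keyA β n ((m : ℤ) - j), if_neg (by omega : ¬ ((m : ℤ) - j < 0))]
        have ht : ((m : ℤ) - j).toNat = m - j := by omega
        have hnb : (n : ℝ) - β = α := by rw [hβ]; ring
        rw [ht, hnb]
    _ = ∑ k ∈ Finset.range m, (-1 : ℝ) ^ k * rbinom α k * f (a + m - k) := by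
        refine Finset.sum_nbij' (fun j => m - j) (fun k => m - k) ?_ ?_ ?_ ?_ ?_
        · intro j hj; simp only [Finset.mem_Icc] at hj; simp only [Finset.mem_range]; omega
        · intro k hk; simp only [Finset.mem_range] at hk; simp only [Finset.mem_Icc]; omega
        · intro j hj; simp only [Finset.mem_Icc] at hj; omega
        · intro k hk; simp only [Finset.mem_range] at hk; omega
        · intro j hj
          simp only [Finset.mem_Icc] at hj
          have : a + (m : ℝ) - ((m - j : ℕ) : ℝ) = a + j := by
            rw [Nat.cast_sub hj.2]; ring
          rw [this]
end
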